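/- arXiv:math/0212360 — 2 statements merged into one kernel-verified Lean document; each statement's English description precedes it below -/
import Mathlib

section
/- If u ∈ L∞(D,dA), then the Berezin transform ũ is real analytic on D and its Laplacian at the origin satisfies (Δũ)(0) = 8 ∫_D u(z)(2|z|² − 1) dA(z). -/
open MeasureTheory Complex Metric Filter

set_option maxHeartbeats 2000000
set_option synthInstance.maxHeartbeats 1000000

noncomputable section

/-- The open unit disk in `ℂ`. -/
def unitDisk : Set ℂ := Metric.ball (0 : ℂ) 1

/-- Normalized Lebesgue area measure on the unit disk (total mass 1). -/
def dA : Measure ℂ := (ENNReal.ofReal Real.pi)⁻¹ • (MeasureTheory.volume.restrict unitDisk)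

/-- `L²(D, dA)`. -/
abbrev Bsp := MeasureTheory.Lp ℂ 2 dA

/-- The Bergman space: elements of `L²(D,dA)` having a representative holomorphic on `D`. -/
def bergman : Submodule ℂ Bsp where
  carrier := {f | ∃ g : ℂ → ℂ, DifferentiableOn ℂ g unitDisk ∧ ∀ᵐ w ∂dA, f w = g w}
  zero_mem' := ⟨fun _ => 0, differentiableOn_const 0, by
    filter_upwards [MeasureTheory.Lp.coeFn_zero ℂ 2 dA] with w hw
    simpa using hw⟩
  add_mem' := by
    rintro f₁ f₂ ⟨g₁, hg₁, he₁⟩ ⟨g₂, hg₂, he₂⟩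
    exact ⟨g₁ + g₂, hg₁.add hg₂, by
      filter_upwards [MeasureTheory.Lp.coeFn_add f₁ f₂, he₁, he₂] with w h1 h2 h3
      rw [h1, Pi.add_apply, h2, h3, Pi.add_apply]⟩
  smul_mem' := by
    rintro c f ⟨g, hg, he⟩
    exact ⟨c • g, hg.const_smul c, by
      filter_upwards [MeasureTheory.Lp.coeFn_smul c f, he] with w h1 h2
      rw [h1, Pi.smul_apply, h2, Pi.smul_apply]⟩

noncomputable instance : NormedAddCommGroup (↥bergman) := inferInstance
noncomputable instance : InnerProductSpace ℂ (↥bergman) := inferInstance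
noncomputable instance : NormedSpace ℂ (↥bergman) := inferInstance

/-- The value function of an element of the Bergman space. -/
def bval (f : bergman) : ℂ → ℂ := ⇑(f : Bsp)

/-- The normalized Bergman reproducing kernel `k_z`. -/
def kerFun (z w : ℂ) : ℂ := (1 - (‖z‖ : ℂ) ^ 2) / (1 - (starRingEnd ℂ) z * w) ^ 2

/-- The Möbius map `φ_z`. -/
def moebius (z w : ℂ) : ℂ := (z - w) / (1 - (starRingEnd ℂ) z * w)

/-- Bounded measurable functions, i.e. (representatives of) elements of `L∞(D, dA)`. -/
def MemLinf (u : ℂ → ℂ) : Prop :=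
  MeasureTheory.AEStronglyMeasurable u dA ∧ ∃ C : ℝ, ∀ᵐ w ∂dA, ‖u w‖ ≤ C

/-- `H∞`: bounded holomorphic functions on the unit disk. -/
def Hinf : Set (ℂ → ℂ) :=
  {f | DifferentiableOn ℂ f unitDisk ∧ ∃ C : ℝ, ∀ w ∈ unitDisk, ‖f w‖ ≤ C}

/-- Membership in `𝒰`, the C*-subalgebra of `L∞(D,dA)` generated by `H∞`: uniform limits
on `D` of finite sums of functions `f * conj g` with `f, g ∈ H∞`. -/
def memU (u : ℂ → ℂ) : Prop :=
  MemLinf u ∧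
    ∀ ε : ℝ, 0 < ε → ∃ (n : ℕ) (f g : Fin n → ℂ → ℂ),
      (∀ i, f i ∈ Hinf) ∧ (∀ i, g i ∈ Hinf) ∧
        ∀ w ∈ unitDisk, ‖u w - ∑ i, f i w * (starRingEnd ℂ) (g i w)‖ ≤ ε

/-- `T` is the Toeplitz-operator assignment: for every `u ∈ L∞(D,dA)`, `T u` is the operator
on the Bergman space characterized by `⟨g, T_u f⟩ = ⟨g, u f⟩` for all `f, g` in the Bergman
space (i.e. `T_u f = P (u f)` with `P` the orthogonal projection onto the Bergman space). -/
def IsToeplitz (T : (ℂ → ℂ) → (bergman →L[ℂ] bergman)) : Prop :=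
  ∀ u : ℂ → ℂ, MemLinf u → ∀ f g : bergman,
    (inner ℂ ((g : Bsp)) ((T u f : Bsp)) : ℂ) =
      ∫ w, (starRingEnd ℂ) (bval g w) * (u w * bval f w) ∂dA

/-- `k` is the assignment of normalized reproducing kernels `z ↦ k_z ∈ L²ₐ` for `z ∈ D`. -/
def IsKernel (k : ℂ → bergman) : Prop :=
  ∀ z ∈ unitDisk, ∀ᵐ w ∂dA, bval (k z) w = kerFun z w

/-- The Berezin transform of an operator on the Bergman space, relative to the kernel
assignment `k`:  `S̃(z) = ⟨S k_z, k_z⟩`. -/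
def berezinOp (k : ℂ → bergman) (S : bergman →L[ℂ] bergman) (z : ℂ) : ℂ :=
  (inner ℂ (k z) (S (k z)) : ℂ)

/-- The Berezin transform of a function: `ũ(z) = ∫_D u(w) |k_z(w)|² dA(w)`. -/
def berezinF (u : ℂ → ℂ) (z : ℂ) : ℂ :=
  ∫ w, u w * (((1 - ‖z‖ ^ 2) ^ 2 / ‖1 - (starRingEnd ℂ) z * w‖ ^ 4 : ℝ) : ℂ) ∂dA

/-- The Stolz (nontangential approach) region at `λ` with aperture `c`. -/
def stolz (lam : ℂ) (c : ℝ) : Set ℂ :=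
  {z | z ∈ unitDisk ∧ ‖z - lam‖ < c * (1 - ‖z‖)}

/-- `F` has nontangential limit `L` at the boundary point `λ`. -/
def HasNTLimit {E : Type*} [TopologicalSpace E] (F : ℂ → E) (lam : ℂ) (L : E) : Prop :=
  ∀ c : ℝ, 1 < c → Filter.Tendsto F (nhdsWithin lam (stolz lam c)) (nhds L)

/-- The filter of `z ∈ D` with `|z| → 1⁻`. -/
def atBoundary : Filter ℂ := Filter.comap (fun z => ‖z‖) (nhdsWithin 1 (Set.Iio 1))

/-- The Laplacian `Δ F = ∂²F/∂x² + ∂²F/∂y²` of a function on `ℂ ≃ ℝ²`. -/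
def lap (F : ℂ → ℂ) (z : ℂ) : ℂ :=
  fderiv ℝ (fun w => fderiv ℝ F w 1) z 1 +
    fderiv ℝ (fun w => fderiv ℝ F w Complex.I) z Complex.I

/-- A complex-valued function is harmonic on the unit disk if it is (twice continuously
differentiable and) has vanishing Laplacian there. -/
def HarmonicOnD (u : ℂ → ℂ) : Prop :=
  ContDiffOn ℝ 2 u unitDisk ∧ ∀ z ∈ unitDisk, lap u z = 0

end

/-!
For `‖z‖ < 1` and `‖w‖ < 1` the kernel expands as
`|k_z(w)|² = (1 - z̄z)² ∑_{m,n} (m+1)(n+1) (z̄w)ᵐ (zw̄)ⁿ`, and for integrable `u` this series can be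
integrated termwise against `u`. With the moments `c(m,n) = ∫ u wᵐ w̄ⁿ dA`, this writes `ũ` on `D`
as `(1 - z̄z)² ∑ (m+1)(n+1) c(m,n) z̄ᵐ zⁿ`, i.e. as a single power series `∑ B(m,n) z̄ᵐ zⁿ`.
A power series in `z̄` and `z` is a real power series (symmetrize each homogeneous part into an
`ℝ`-multilinear map), which gives analyticity, and its Laplacian at `0` is
`4 B(1,1) = 4 (4 c(1,1) - 2 c(0,0))`.
-/
open Finset InnerProductSpace Laplacian Topology
open scoped NNReal ComplexConjugate

noncomputable section

theorem HasSum.sum_antidiagonal {M α : Type*} [AddMonoid M] [HasAntidiagonal M]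
    [AddCommMonoid α] [TopologicalSpace α] [ContinuousAdd α] [RegularSpace α] {f : M × M → α}
    {a : α} (hf : HasSum f a) : HasSum (fun N => ∑ p ∈ antidiagonal N, f p) a := by
  rw [← HasAntidiagonal.sigmaAntidiagonalEquivProd.hasSum_iff] at hf
  refine hf.sigma fun N => ?_
  rw [← Finset.sum_coe_sort]
  exact hasSum_fintype _

theorem Finset.sum_div_choose_card_eq_sum_range {K : Type*} [Field K] [CharZero K] (N : ℕ)
    (f : ℕ → K) :
    ∑ S : Finset (Fin N), f S.card / N.choose S.card = ∑ m ∈ range (N + 1), f m := by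
  rw [← powerset_univ, sum_powerset_apply_card (fun m => f m / N.choose m), card_univ,
    Fintype.card_fin]
  refine sum_congr rfl fun m hm => ?_
  have hchoose : (N.choose m : K) ≠ 0 :=
    Nat.cast_ne_zero.mpr (Nat.choose_pos (Nat.lt_succ_iff.mp (mem_range.mp hm))).ne'
  rw [nsmul_eq_mul, mul_div_cancel₀ _ hchoose]

theorem hasSum_succ_mul_geometric {a : ℂ} (ha : ‖a‖ < 1) :
    HasSum (fun n : ℕ => ((n + 1 : ℕ) : ℂ) * a ^ n) (1 / (1 - a) ^ 2) := by
  simpa using hasSum_choose_mul_geometric_of_norm_lt_one 1 ha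

theorem summable_succ_mul_geometric {r : ℝ} (h0 : 0 ≤ r) (h1 : r < 1) :
    Summable fun n : ℕ => ((n + 1 : ℕ) : ℝ) * r ^ n := by
  simpa using summable_choose_mul_geometric_of_norm_lt_one 1 (by rwa [Real.norm_of_nonneg h0])

theorem summable_succ_mul_succ_mul_pow {r : ℝ} (h0 : 0 ≤ r) (h1 : r < 1) :
    Summable fun p : ℕ × ℕ => (((p.1 + 1) * (p.2 + 1) : ℕ) : ℝ) * r ^ (p.1 + p.2) := by
  have h := summable_succ_mul_geometric h0 h1
  refine (h.mul_of_nonneg h (fun n => by positivity) fun n => by positivity).congr fun p => ?_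
  push_cast
  ring

theorem lap_eq_laplacian {F : ℂ → ℂ} {z : ℂ} (hF : DifferentiableAt ℝ (fderiv ℝ F) z) :
    lap F z = Δ F z := by
  have hpartial (c : ℂ) :
      fderiv ℝ (fun w => fderiv ℝ F w c) z c = iteratedFDeriv ℝ 2 F z ![c, c] := by
    rw [fderiv_clm_apply hF (differentiableAt_const c), iteratedFDeriv_two_apply]
    simp
  rw [lap, hpartial, hpartial, laplacian_eq_iteratedFDeriv_complexPlane]

theorem HasFPowerSeriesAt.laplacian_eq {E : Type*} [NormedAddCommGroup E] [NormedSpace ℝ E]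
    [CompleteSpace E] {f : ℂ → E} {p : FormalMultilinearSeries ℝ ℂ E} {x : ℂ}
    (hf : HasFPowerSeriesAt f p x) :
    Δ f x = 2 • (p 2 (fun _ => 1) + p 2 (fun _ => Complex.I)) := by
  obtain ⟨r, hr⟩ := hf
  have hdiag (c : ℂ) : ![c, c] = fun _ => c := by
    ext i; fin_cases i <;> rfl
  rw [laplacian_eq_iteratedFDeriv_complexPlane]
  dsimp only
  rw [hdiag, hdiag, ← hr.factorial_smul, ← hr.factorial_smul, ← smul_add]
  norm_num [Nat.factorial]

section ConjPowerSeries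

variable {A B : ℕ × ℕ → ℂ}

def conjProdML {N : ℕ} (S : Finset (Fin N)) :
    ContinuousMultilinearMap ℝ (fun _ : Fin N => ℂ) ℂ :=
  (ContinuousMultilinearMap.mkPiAlgebra ℝ (Fin N) ℂ).compContinuousLinearMap
    fun i => if i ∈ S then Complex.conjCLE.toContinuousLinearMap else ContinuousLinearMap.id ℝ ℂ

theorem conjProdML_apply {N : ℕ} (S : Finset (Fin N)) (v : Fin N → ℂ) :
    conjProdML S v = ∏ i, if i ∈ S then conj (v i) else v i := by
  simp only [conjProdML, ContinuousMultilinearMap.compContinuousLinearMap_apply,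
    ContinuousMultilinearMap.mkPiAlgebra_apply]
  refine prod_congr rfl fun i _ => ?_
  split_ifs <;> rfl

theorem norm_conjProdML_le {N : ℕ} (S : Finset (Fin N)) : ‖conjProdML S‖ ≤ 1 := by
  refine ContinuousMultilinearMap.opNorm_le_bound zero_le_one fun v => ?_
  rw [conjProdML_apply, one_mul, norm_prod]
  refine prod_le_prod (fun i _ => norm_nonneg _) fun i _ => ?_
  split_ifs <;> simp

theorem conjProdML_apply_const {N : ℕ} (S : Finset (Fin N)) (v : ℂ) :
    conjProdML S (fun _ => v) = conj v ^ S.card * v ^ (N - S.card) := by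
  rw [conjProdML_apply, ← prod_mul_prod_compl S, prod_congr rfl fun i hi => if_pos hi,
    prod_congr rfl fun i hi => if_neg (mem_compl.mp hi), prod_const, prod_const, card_compl,
    Fintype.card_fin]

/-- Each monomial `A (m, n) z̄ᵐ zⁿ` is spread evenly over the `choose (m + n) m` subsets
of size `m` of the `m + n` arguments, so that the diagonal of the `N`-th term is the
homogeneous part of degree `N`. -/
def conjPowSeries (A : ℕ × ℕ → ℂ) : FormalMultilinearSeries ℝ ℂ ℂ := fun N =>
  ∑ S : Finset (Fin N), (A (S.card, N - S.card) / N.choose S.card) • conjProdML S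

def conjPowSum (A : ℕ × ℕ → ℂ) (z : ℂ) : ℂ :=
  ∑' p : ℕ × ℕ, A p * conj z ^ p.1 * z ^ p.2

theorem conjPowSeries_apply_const (A : ℕ × ℕ → ℂ) (N : ℕ) (v : ℂ) :
    conjPowSeries A N (fun _ => v) = ∑ p ∈ antidiagonal N, A p * conj v ^ p.1 * v ^ p.2 := by
  simp only [conjPowSeries, _root_.sum_apply, smul_apply, conjProdML_apply_const, smul_eq_mul,
    div_mul_eq_mul_div]
  rw [sum_div_choose_card_eq_sum_range N fun m => A (m, N - m) * (conj v ^ m * v ^ (N - m)),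
    Nat.sum_antidiagonal_eq_sum_range_succ_mk]
  simp only [mul_assoc]

theorem norm_conjPowSeries_le (A : ℕ × ℕ → ℂ) (N : ℕ) :
    ‖conjPowSeries A N‖ ≤ ∑ p ∈ antidiagonal N, ‖A p‖ := by
  calc ‖conjPowSeries A N‖
      ≤ ∑ S : Finset (Fin N), ‖A (S.card, N - S.card)‖ / N.choose S.card := by
        refine (norm_sum_le _ _).trans (sum_le_sum fun S _ => ?_)
        refine (norm_smul_le (A (S.card, N - S.card) / N.choose S.card) (conjProdML S)).trans ?_
        rw [norm_div, Complex.norm_natCast]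
        exact mul_le_of_le_one_right (by positivity) (norm_conjProdML_le S)
    _ = ∑ p ∈ antidiagonal N, ‖A p‖ := by
        rw [sum_div_choose_card_eq_sum_range N fun m => ‖A (m, N - m)‖,
          Nat.sum_antidiagonal_eq_sum_range_succ_mk]

theorem hasFPowerSeriesOnBall_conjPowSum {r : ℝ≥0} (hr : 0 < r)
    (hA : Summable fun p : ℕ × ℕ => ‖A p‖ * (r : ℝ) ^ (p.1 + p.2)) :
    HasFPowerSeriesOnBall (conjPowSum A) (conjPowSeries A) 0 r where
  r_le := by
    refine FormalMultilinearSeries.le_radius_of_summable _ <|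
      hA.hasSum.sum_antidiagonal.summable.of_nonneg_of_le (fun N => by positivity) fun N => ?_
    refine (mul_le_mul_of_nonneg_right (norm_conjPowSeries_le A N) (by positivity)).trans_eq ?_
    rw [sum_mul]
    exact sum_congr rfl fun p hp => by rw [mem_antidiagonal.mp hp]
  r_pos := by exact_mod_cast hr
  hasSum {y} hy := by
    have hy : ‖y‖ ≤ r := by
      rw [Metric.mem_eball, edist_zero_right] at hy
      exact_mod_cast (enorm_lt_coe.mp hy).le
    have hsum : Summable fun p : ℕ × ℕ => A p * conj y ^ p.1 * y ^ p.2 := by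
      refine Summable.of_norm_bounded hA fun p => ?_
      rw [norm_mul, norm_mul, norm_pow, norm_pow, Complex.norm_conj, mul_assoc, ← pow_add]
      gcongr
    simpa only [zero_add, conjPowSeries_apply_const, conjPowSum] using
      hsum.hasSum.sum_antidiagonal

theorem laplacian_conjPowSum_zero {r : ℝ≥0} (hr : 0 < r)
    (hA : Summable fun p : ℕ × ℕ => ‖A p‖ * (r : ℝ) ^ (p.1 + p.2)) :
    Δ (conjPowSum A) 0 = 4 * A (1, 1) := by
  rw [(hasFPowerSeriesOnBall_conjPowSum hr hA).hasFPowerSeriesAt.laplacian_eq,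
    conjPowSeries_apply_const, conjPowSeries_apply_const]
  simp only [Nat.sum_antidiagonal_eq_sum_range_succ_mk, sum_range_succ, sum_range_zero,
    Nat.reduceSub, map_one, Complex.conj_I, nsmul_eq_mul]
  linear_combination 2 * (A (0, 2) + A (2, 0) - A (1, 1)) * Complex.I_sq

def ConvergesOnUnitDisk (A : ℕ × ℕ → ℂ) : Prop :=
  ∀ r : ℝ≥0, r < 1 → Summable fun p : ℕ × ℕ => ‖A p‖ * (r : ℝ) ^ (p.1 + p.2)

theorem ConvergesOnUnitDisk.summable (hA : ConvergesOnUnitDisk A) {z : ℂ} (hz : ‖z‖ < 1) :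
    Summable fun p : ℕ × ℕ => A p * conj z ^ p.1 * z ^ p.2 := by
  refine Summable.of_norm ((hA ‖z‖₊ hz).congr fun p => ?_)
  rw [norm_mul, norm_mul, norm_pow, norm_pow, Complex.norm_conj, mul_assoc, ← pow_add, coe_nnnorm]

theorem ConvergesOnUnitDisk.analyticAt (hA : ConvergesOnUnitDisk A) {z : ℂ} (hz : ‖z‖ < 1) :
    AnalyticAt ℝ (conjPowSum A) z := by
  obtain ⟨r, hzr, hr1⟩ := exists_between (show ‖z‖₊ < 1 from hz)
  refine (hasFPowerSeriesOnBall_conjPowSum (hzr.trans_le' zero_le) (hA r hr1)).analyticAt_of_mem ?_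
  rw [Metric.mem_eball, edist_zero_right]
  exact enorm_lt_coe.mpr hzr

theorem ConvergesOnUnitDisk.add (hA : ConvergesOnUnitDisk A) (hB : ConvergesOnUnitDisk B) :
    ConvergesOnUnitDisk (A + B) := fun r hr =>
  ((hA r hr).add (hB r hr)).of_nonneg_of_le (fun _ => by positivity) fun p => by
    rw [← add_mul]
    gcongr
    exact norm_add_le _ _

theorem ConvergesOnUnitDisk.sub (hA : ConvergesOnUnitDisk A) (hB : ConvergesOnUnitDisk B) :
    ConvergesOnUnitDisk (A - B) := fun r hr =>
  ((hA r hr).add (hB r hr)).of_nonneg_of_le (fun _ => by positivity) fun p => by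
    rw [← add_mul]
    gcongr
    exact norm_sub_le _ _

theorem ConvergesOnUnitDisk.const_smul (hA : ConvergesOnUnitDisk A) (c : ℂ) :
    ConvergesOnUnitDisk (c • A) := fun r hr =>
  ((hA r hr).mul_left ‖c‖).congr fun p => by rw [Pi.smul_apply, norm_smul, mul_assoc]

theorem conjPowSum_add (hA : ConvergesOnUnitDisk A) (hB : ConvergesOnUnitDisk B) {z : ℂ}
    (hz : ‖z‖ < 1) : conjPowSum (A + B) z = conjPowSum A z + conjPowSum B z := by
  rw [conjPowSum, conjPowSum, conjPowSum, ← (hA.summable hz).tsum_add (hB.summable hz)]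
  simp only [Pi.add_apply, add_mul]

theorem conjPowSum_sub (hA : ConvergesOnUnitDisk A) (hB : ConvergesOnUnitDisk B) {z : ℂ}
    (hz : ‖z‖ < 1) : conjPowSum (A - B) z = conjPowSum A z - conjPowSum B z := by
  rw [conjPowSum, conjPowSum, conjPowSum, ← (hA.summable hz).tsum_sub (hB.summable hz)]
  simp only [Pi.sub_apply, sub_mul]

theorem conjPowSum_const_smul (c : ℂ) (A : ℕ × ℕ → ℂ) (z : ℂ) :
    conjPowSum (c • A) z = c * conjPowSum A z := by
  rw [conjPowSum, conjPowSum, ← tsum_mul_left]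
  simp only [Pi.smul_apply, smul_eq_mul, mul_assoc]

def diagShift (k : ℕ) (A : ℕ × ℕ → ℂ) : ℕ × ℕ → ℂ :=
  Function.extend (fun p : ℕ × ℕ => (p.1 + k, p.2 + k)) A 0

theorem diagShift_injective (k : ℕ) : Function.Injective fun p : ℕ × ℕ => (p.1 + k, p.2 + k) :=
  fun p q h => by simpa [Prod.ext_iff] using h

theorem diagShift_apply_add (k : ℕ) (A : ℕ × ℕ → ℂ) (p : ℕ × ℕ) :
    diagShift k A (p.1 + k, p.2 + k) = A p :=
  (diagShift_injective k).extend_apply A 0 p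

theorem diagShift_apply_of_notMem_range {k : ℕ} {p : ℕ × ℕ}
    (hp : p ∉ Set.range fun q : ℕ × ℕ => (q.1 + k, q.2 + k)) (A : ℕ × ℕ → ℂ) :
    diagShift k A p = 0 :=
  Function.extend_apply' _ _ _ hp

theorem ConvergesOnUnitDisk.diagShift (hA : ConvergesOnUnitDisk A) (k : ℕ) :
    ConvergesOnUnitDisk (diagShift k A) := by
  intro r hr
  rw [← (diagShift_injective k).summable_iff fun p hp => by
    rw [diagShift_apply_of_notMem_range hp, norm_zero, zero_mul]]
  refine ((hA r hr).mul_left ((r : ℝ) ^ (2 * k))).congr fun p => ?_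
  simp only [Function.comp_apply, diagShift_apply_add]
  ring

theorem conjPowSum_diagShift (k : ℕ) (A : ℕ × ℕ → ℂ) (z : ℂ) :
    conjPowSum (diagShift k A) z = (conj z * z) ^ k * conjPowSum A z := by
  rw [conjPowSum, ← (diagShift_injective k).tsum_eq fun p hp => ?_, conjPowSum, ← tsum_mul_left]
  · simp only [diagShift_apply_add]
    exact tsum_congr fun p => by ring
  · contrapose! hp
    rw [Function.notMem_support, diagShift_apply_of_notMem_range hp, zero_mul, zero_mul]

end ConjPowerSeries

theorem ofReal_berezinKernel (z w : ℂ) :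
    (((1 - ‖z‖ ^ 2) ^ 2 / ‖1 - conj z * w‖ ^ 4 : ℝ) : ℂ) =
      (1 - conj z * z) ^ 2 * (1 / (1 - conj z * w) ^ 2 * (1 / (1 - conj (conj z * w)) ^ 2)) := by
  have hconj : conj (1 - conj z * w) = 1 - conj (conj z * w) := by rw [map_sub, map_one]
  have hnorm4 : ((‖1 - conj z * w‖ ^ 4 : ℝ) : ℂ) =
      ((1 - conj z * w) * (1 - conj (conj z * w))) ^ 2 := by
    rw [← hconj, Complex.mul_conj']
    push_cast
    ring
  rw [Complex.ofReal_div, hnorm4, Complex.conj_mul']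
  push_cast
  rw [mul_pow]
  field_simp

theorem hasSum_berezinKernel {z w : ℂ} (hz : ‖z‖ < 1) (hw : ‖w‖ < 1) :
    HasSum (fun p : ℕ × ℕ => (((p.1 + 1) * (p.2 + 1) : ℕ) : ℂ) * conj z ^ p.1 * z ^ p.2 *
        (w ^ p.1 * conj w ^ p.2))
      (1 / (1 - conj z * w) ^ 2 * (1 / (1 - conj (conj z * w)) ^ 2)) := by
  have ha : ‖conj z * w‖ < 1 := by
    rw [norm_mul, Complex.norm_conj]
    exact mul_lt_one_of_nonneg_of_lt_one_left (norm_nonneg z) hz hw.le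
  have hb : ‖conj (conj z * w)‖ < 1 := by rwa [Complex.norm_conj]
  have hnorm (b : ℂ) (hb : ‖b‖ < 1) : Summable fun n : ℕ => ‖((n + 1 : ℕ) : ℂ) * b ^ n‖ := by
    refine (summable_succ_mul_geometric (norm_nonneg b) hb).congr fun n => ?_
    rw [norm_mul, norm_pow, Complex.norm_natCast]
  have hprod := summable_mul_of_summable_norm (hnorm _ ha) (hnorm _ hb)
  refine ((hasSum_succ_mul_geometric ha).mul (hasSum_succ_mul_geometric hb) hprod).congr_fun
    fun p => ?_
  simp only [map_mul, Complex.conj_conj, mul_pow]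
  push_cast
  ring

instance : IsFiniteMeasure dA where
  measure_univ_lt_top := by
    rw [dA, Measure.smul_apply, Measure.restrict_apply_univ, smul_eq_mul]
    exact ENNReal.mul_lt_top (ENNReal.inv_lt_top.mpr (ENNReal.ofReal_pos.mpr Real.pi_pos))
      measure_ball_lt_top

theorem ae_norm_lt_one_dA : ∀ᵐ w ∂dA, ‖w‖ < 1 := by
  rw [dA]
  refine Measure.ae_smul_measure ?_ _
  filter_upwards [ae_restrict_mem measurableSet_ball] with w hw
  simpa [unitDisk] using hw

theorem MemLinf.integrable {u : ℂ → ℂ} (hu : MemLinf u) : Integrable u dA :=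
  (integrable_const hu.2.choose).mono' hu.1 hu.2.choose_spec

section Moments

variable {u : ℂ → ℂ}

def diskMoment (u : ℂ → ℂ) (p : ℕ × ℕ) : ℂ := ∫ w, u w * w ^ p.1 * conj w ^ p.2 ∂dA

def momentCoeff (u : ℂ → ℂ) (p : ℕ × ℕ) : ℂ :=
  (((p.1 + 1) * (p.2 + 1) : ℕ) : ℂ) * diskMoment u p

theorem norm_mul_monomial_le (u : ℂ → ℂ) (p : ℕ × ℕ) :
    ∀ᵐ w ∂dA, ‖u w * w ^ p.1 * conj w ^ p.2‖ ≤ ‖u w‖ := by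
  filter_upwards [ae_norm_lt_one_dA] with w hw
  rw [norm_mul, norm_mul, norm_pow, norm_pow, Complex.norm_conj, mul_assoc]
  exact mul_le_of_le_one_right (norm_nonneg _)
    (mul_le_one₀ (pow_le_one₀ (norm_nonneg w) hw.le) (by positivity)
      (pow_le_one₀ (norm_nonneg w) hw.le))

theorem integrable_mul_monomial (hu : Integrable u dA) (p : ℕ × ℕ) :
    Integrable (fun w => u w * w ^ p.1 * conj w ^ p.2) dA := by
  refine hu.norm.mono' ?_ (norm_mul_monomial_le u p)
  exact (hu.aestronglyMeasurable.mul (continuous_pow p.1).aestronglyMeasurable).mul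
    (Complex.continuous_conj.pow p.2).aestronglyMeasurable

theorem integral_norm_mul_monomial_le (hu : Integrable u dA) (p : ℕ × ℕ) :
    ∫ w, ‖u w * w ^ p.1 * conj w ^ p.2‖ ∂dA ≤ ∫ w, ‖u w‖ ∂dA :=
  integral_mono_ae (integrable_mul_monomial hu p).norm hu.norm (norm_mul_monomial_le u p)

theorem convergesOnUnitDisk_momentCoeff (hu : Integrable u dA) :
    ConvergesOnUnitDisk (momentCoeff u) := by
  intro r hr
  refine ((summable_succ_mul_succ_mul_pow r.coe_nonneg hr).mul_left (∫ w, ‖u w‖ ∂dA))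
    |>.of_nonneg_of_le (fun _ => by positivity) fun p => ?_
  rw [momentCoeff, norm_mul, Complex.norm_natCast, ← mul_assoc, mul_comm (∫ w, ‖u w‖ ∂dA)]
  gcongr
  exact (norm_integral_le_integral_norm _).trans (integral_norm_mul_monomial_le hu p)

theorem berezinF_eq_mul_conjPowSum (hu : Integrable u dA) {z : ℂ} (hz : ‖z‖ < 1) :
    berezinF u z = (1 - conj z * z) ^ 2 * conjPowSum (momentCoeff u) z := by
  set c : ℕ × ℕ → ℂ := fun p => (((p.1 + 1) * (p.2 + 1) : ℕ) : ℂ) * conj z ^ p.1 * z ^ p.2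
  set F : ℕ × ℕ → ℂ → ℂ := fun p w => c p * (u w * w ^ p.1 * conj w ^ p.2)
  have hF_int (p : ℕ × ℕ) : Integrable (F p) dA := (integrable_mul_monomial hu p).const_mul (c p)
  have hF_sum : Summable fun p => ∫ w, ‖F p w‖ ∂dA := by
    refine ((summable_succ_mul_succ_mul_pow (norm_nonneg z) hz).mul_right (∫ w, ‖u w‖ ∂dA))
      |>.of_nonneg_of_le (fun _ => integral_nonneg fun _ => norm_nonneg _) fun p => ?_
    simp only [F, norm_mul (c p), integral_const_mul]
    have hc : ‖c p‖ = (((p.1 + 1) * (p.2 + 1) : ℕ) : ℝ) * ‖z‖ ^ (p.1 + p.2) := by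
      rw [norm_mul, norm_mul, Complex.norm_natCast, norm_pow, norm_pow, Complex.norm_conj,
        pow_add, mul_assoc]
    rw [hc]
    exact mul_le_mul_of_nonneg_left (integral_norm_mul_monomial_le hu p) (by positivity)
  have hkernel : ∀ᵐ w ∂dA, u w * (((1 - ‖z‖ ^ 2) ^ 2 / ‖1 - conj z * w‖ ^ 4 : ℝ) : ℂ) =
      (1 - conj z * z) ^ 2 * ∑' p, F p w := by
    filter_upwards [ae_norm_lt_one_dA] with w hw
    rw [ofReal_berezinKernel, ← (hasSum_berezinKernel hz hw).tsum_eq, ← tsum_mul_left,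
      ← tsum_mul_left, ← tsum_mul_left]
    exact tsum_congr fun p => by simp only [F, c]; ring
  rw [berezinF, integral_congr_ae hkernel, integral_const_mul,
    ← integral_tsum_of_summable_integral_norm hF_int hF_sum]
  congr 1
  exact tsum_congr fun p => by
    simp only [F, c, integral_const_mul, momentCoeff, diskMoment]
    ring

def berezinCoeff (u : ℂ → ℂ) : ℕ × ℕ → ℂ :=
  momentCoeff u - (2 : ℂ) • diagShift 1 (momentCoeff u) + diagShift 2 (momentCoeff u)

theorem convergesOnUnitDisk_berezinCoeff (hu : Integrable u dA) :
    ConvergesOnUnitDisk (berezinCoeff u) :=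
  have hm := convergesOnUnitDisk_momentCoeff hu
  (hm.sub ((hm.diagShift 1).const_smul 2)).add (hm.diagShift 2)

theorem berezinF_eq_conjPowSum (hu : Integrable u dA) {z : ℂ} (hz : ‖z‖ < 1) :
    berezinF u z = conjPowSum (berezinCoeff u) z := by
  have hm := convergesOnUnitDisk_momentCoeff hu
  rw [berezinF_eq_mul_conjPowSum hu hz, berezinCoeff,
    conjPowSum_add (hm.sub ((hm.diagShift 1).const_smul 2)) (hm.diagShift 2) hz,
    conjPowSum_sub hm ((hm.diagShift 1).const_smul 2) hz, conjPowSum_const_smul,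
    conjPowSum_diagShift, conjPowSum_diagShift]
  ring

theorem berezinCoeff_one_one (u : ℂ → ℂ) :
    berezinCoeff u (1, 1) = 4 * diskMoment u (1, 1) - 2 * diskMoment u (0, 0) := by
  have hshift1 : diagShift 1 (momentCoeff u) (1, 1) = momentCoeff u (0, 0) :=
    diagShift_apply_add 1 _ (0, 0)
  have hshift2 : diagShift 2 (momentCoeff u) (1, 1) = 0 :=
    diagShift_apply_of_notMem_range (by simp) _
  simp only [berezinCoeff, Pi.add_apply, Pi.sub_apply, Pi.smul_apply, smul_eq_mul, hshift1,
    hshift2, momentCoeff]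
  norm_num

theorem integral_mul_two_norm_sq_sub_one (hu : Integrable u dA) :
    ∫ z, u z * ((2 * ‖z‖ ^ 2 - 1 : ℝ) : ℂ) ∂dA = 2 * diskMoment u (1, 1) - diskMoment u (0, 0) := by
  have hpoint (z : ℂ) : u z * ((2 * ‖z‖ ^ 2 - 1 : ℝ) : ℂ) =
      2 * (u z * z ^ 1 * conj z ^ 1) - u z * z ^ 0 * conj z ^ 0 := by
    push_cast
    rw [← Complex.mul_conj']
    ring
  simp only [hpoint]
  rw [integral_sub ((integrable_mul_monomial hu (1, 1)).const_mul 2)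
    (integrable_mul_monomial hu (0, 0)), integral_const_mul, diskMoment, diskMoment]

end Moments

end

/-- Lemma 33. If `u ∈ L∞(D,dA)`, then `ũ` is real analytic on `D` and
`(Δũ)(0) = 8 ∫_D u(z) (2|z|² − 1) dA(z)`. -/
theorem berezinF_analytic_and_lap_at_zero (u : ℂ → ℂ) (hu : MemLinf u) :
    (∀ z ∈ unitDisk, AnalyticAt ℝ (berezinF u) z) ∧
      lap (berezinF u) 0 = 8 * ∫ z, u z * ((2 * ‖z‖ ^ 2 - 1 : ℝ) : ℂ) ∂dA := by
  have hint := hu.integrable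
  have hB := convergesOnUnitDisk_berezinCoeff hint
  have hlocal : ∀ z ∈ unitDisk, berezinF u =ᶠ[𝓝 z] conjPowSum (berezinCoeff u) := fun z hz =>
    Metric.isOpen_ball.eventually_mem hz |>.mono fun w hw =>
      berezinF_eq_conjPowSum hint (mem_ball_zero_iff.mp hw)
  have hanalytic : ∀ z ∈ unitDisk, AnalyticAt ℝ (berezinF u) z := fun z hz =>
    (hB.analyticAt (mem_ball_zero_iff.mp hz)).congr (hlocal z hz).symm
  have h0 : (0 : ℂ) ∈ unitDisk := Metric.mem_ball_self one_pos
  refine ⟨hanalytic, ?_⟩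
  rw [lap_eq_laplacian (hanalytic 0 h0).fderiv.differentiableAt,
    (laplacian_congr_nhds (hlocal 0 h0)).eq_of_nhds,
    laplacian_conjPowSum_zero (r := 1 / 2) (by norm_num) (hB _ (by norm_num)),
    berezinCoeff_one_one, integral_mul_two_norm_sq_sub_one hint]
  ring
end

section
/- Suppose u and v are (complex-valued) harmonic functions on D. Then the product uv is harmonic on D if and only if at least one of the following holds: (a) u and v are both holomorphic on D; (b) the conjugates ū and v̄ are both holomorphic on D; (c) there exist complex numbers α, β, not both 0, such that αu + βv and ᾱū − β̄v̄ are both holomorphic on D. -/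
open MeasureTheory Complex Metric Filter

set_option maxHeartbeats 2000000
set_option synthInstance.maxHeartbeats 1000000

/-!
Write `∂ = (∂ₓ - i ∂_y)/2` and `∂̄ = (∂ₓ + i ∂_y)/2` for the Wirtinger derivatives. The Leibniz rule
gives `Δ(uv) = uΔv + vΔu + 4(∂u ∂̄v + ∂̄u ∂v)`, so for harmonic `u, v` the product is harmonic iff
`∂u ∂̄v + ∂̄u ∂v = 0`. Since `Δ = 4∂̄∂`, the functions `∂u, ∂v` are holomorphic and `∂̄u, ∂̄v`
antiholomorphic, and a combination `αu + βv` (resp. `ᾱū - β̄v̄`) is holomorphic iff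
`α∂̄u + β∂̄v = 0` (resp. `α∂u - β∂v = 0`).

Near a point where `∂v` and `∂̄v` do not vanish, `∂u/∂v = -∂̄u/∂̄v` is both holomorphic and
antiholomorphic, hence a constant `c`, and the identity theorem gives `∂u = c∂v`, `∂̄u = -c∂̄v` on
the disk: case (c) with `(α, β) = (1, c)`. Otherwise `∂v ∂̄v ≡ 0`, so `∂v ≡ 0` or `∂̄v ≡ 0`, and
the relation `∂u ∂̄v + ∂̄u ∂v = 0` kills one more factor identically: cases (a), (b), or (c) with
`(α, β) = (0, 1)`.
-/

open Complex ComplexConjugate Topology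

noncomputable def dz (u : ℂ → ℂ) (z : ℂ) : ℂ := (fderiv ℝ u z 1 - I * fderiv ℝ u z I) / 2

noncomputable def dzbar (u : ℂ → ℂ) (z : ℂ) : ℂ := (fderiv ℝ u z 1 + I * fderiv ℝ u z I) / 2

section Wirtinger

variable {U : Set ℂ} {u v : ℂ → ℂ} {z : ℂ}

theorem fderiv_apply_eq_dz_add_dzbar (u : ℂ → ℂ) (z c : ℂ) :
    fderiv ℝ u z c = c * dz u z + conj c * dzbar u z := by
  have hc : c = c.re • (1 : ℂ) + c.im • I := by simp [Complex.real_smul, re_add_im]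
  conv_lhs => rw [hc]
  rw [map_add, map_smul, map_smul, dz, dzbar]
  conv_rhs => rw [← re_add_im c]
  simp only [Complex.real_smul, map_add, map_mul, conj_ofReal, conj_I]
  linear_combination (↑c.im * fderiv ℝ u z I) * I_sq

theorem fderiv_conj_apply (u : ℂ → ℂ) (z c : ℂ) :
    fderiv ℝ (fun w => conj (u w)) z c = conj (fderiv ℝ u z c) := by
  rw [show (fun w => conj (u w)) = conjCLE ∘ u from rfl, conjCLE.comp_fderiv]
  rfl

theorem dz_conj (u : ℂ → ℂ) (z : ℂ) : dz (fun w => conj (u w)) z = conj (dzbar u z) := by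
  simp only [dz, dzbar, fderiv_conj_apply, map_div₀, map_add, map_mul, conj_I, map_ofNat]
  ring

theorem dzbar_conj (u : ℂ → ℂ) (z : ℂ) : dzbar (fun w => conj (u w)) z = conj (dz u z) := by
  simp only [dz, dzbar, fderiv_conj_apply, map_div₀, map_sub, map_mul, conj_I, map_ofNat]
  ring

theorem dzbar_const_mul_add_const_mul (hu : DifferentiableAt ℝ u z) (hv : DifferentiableAt ℝ v z)
    (a b : ℂ) : dzbar (fun w => a * u w + b * v w) z = a * dzbar u z + b * dzbar v z := by
  simp only [dzbar, fderiv_fun_add (hu.const_mul a) (hv.const_mul b), fderiv_const_mul hu,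
    fderiv_const_mul hv, add_apply, smul_apply, smul_eq_mul]
  ring

theorem differentiableAt_iff_dzbar_eq_zero (hu : DifferentiableAt ℝ u z) :
    DifferentiableAt ℂ u z ↔ dzbar u z = 0 := by
  rw [differentiableAt_complex_iff_differentiableAt_real, and_iff_right hu, dzbar, smul_eq_mul]
  constructor
  · intro h
    rw [h]
    linear_combination (fderiv ℝ u z 1 / 2) * I_sq
  · intro h
    linear_combination (-2 * I) * h + fderiv ℝ u z I * I_sq

theorem fderiv_eq_zero_of_differentiableAt_conj (hu : DifferentiableAt ℂ u z)
    (hu' : DifferentiableAt ℂ (fun w => conj (u w)) z) : fderiv ℝ u z = 0 := by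
  have h1 := (differentiableAt_iff_dzbar_eq_zero (hu.restrictScalars ℝ)).1 hu
  have h2 := (differentiableAt_iff_dzbar_eq_zero (hu'.restrictScalars ℝ)).1 hu'
  rw [dzbar_conj, map_eq_zero] at h2
  ext1 c
  rw [fderiv_apply_eq_dz_add_dzbar, h1, h2]
  simp

theorem differentiableOn_const_mul_add_const_mul_iff (hU : IsOpen U)
    (hu : DifferentiableOn ℝ u U) (hv : DifferentiableOn ℝ v U) (a b : ℂ) :
    DifferentiableOn ℂ (fun w => a * u w + b * v w) U ↔
      ∀ z ∈ U, a * dzbar u z + b * dzbar v z = 0 := by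
  have key : ∀ z ∈ U, DifferentiableAt ℂ (fun w => a * u w + b * v w) z ↔
      a * dzbar u z + b * dzbar v z = 0 := fun z hz => by
    have hu' := hu.differentiableAt (hU.mem_nhds hz)
    have hv' := hv.differentiableAt (hU.mem_nhds hz)
    rw [differentiableAt_iff_dzbar_eq_zero ((hu'.const_mul a).fun_add (hv'.const_mul b)),
      dzbar_const_mul_add_const_mul hu' hv']
  exact ⟨fun h z hz => (key z hz).1 (h.differentiableAt (hU.mem_nhds hz)),
    fun h z hz => ((key z hz).2 (h z hz)).differentiableWithinAt⟩

end Wirtinger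

section Laplacian

variable {u v : ℂ → ℂ} {z : ℂ}

theorem hasFDerivAt_fderiv_apply (hu : DifferentiableAt ℝ (fderiv ℝ u) z) (c : ℂ) :
    HasFDerivAt (fun w => fderiv ℝ u w c) ((fderiv ℝ (fderiv ℝ u) z).flip c) z := by
  simpa using hu.hasFDerivAt.clm_apply (hasFDerivAt_const c z)

theorem ContDiffAt.differentiableAt_fderiv (hu : ContDiffAt ℝ 2 u z) :
    DifferentiableAt ℝ (fderiv ℝ u) z :=
  (hu.fderiv_right (m := 1) le_rfl).differentiableAt one_ne_zero

theorem lap_conj (u : ℂ → ℂ) (z : ℂ) : lap (fun w => conj (u w)) z = conj (lap u z) := by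
  simp only [lap, fderiv_conj_apply, map_add]

theorem differentiableAt_dz_of_lap_eq_zero (hu : ContDiffAt ℝ 2 u z) (hlap : lap u z = 0) :
    DifferentiableAt ℂ (dz u) z := by
  have h1 := hasFDerivAt_fderiv_apply hu.differentiableAt_fderiv 1
  have hI := hasFDerivAt_fderiv_apply hu.differentiableAt_fderiv I
  have hdz : HasFDerivAt (dz u) ((2 : ℂ)⁻¹ • ((fderiv ℝ (fderiv ℝ u) z).flip 1 -
      I • (fderiv ℝ (fderiv ℝ u) z).flip I)) z := by
    have e : dz u = fun w => (2 : ℂ)⁻¹ * (fderiv ℝ u w 1 - I * fderiv ℝ u w I) := by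
      funext w
      rw [dz, div_eq_inv_mul]
    rw [e]
    exact (h1.sub (hI.const_mul I)).const_mul _
  have hsymm := hu.isSymmSndFDerivAt (by simp) I 1
  rw [lap, h1.fderiv, hI.fderiv] at hlap
  refine differentiableAt_complex_iff_differentiableAt_real.2 ⟨hdz.differentiableAt, ?_⟩
  rw [hdz.fderiv]
  simp only [ContinuousLinearMap.flip_apply, smul_apply, sub_apply, smul_eq_mul] at hlap ⊢
  linear_combination (2⁻¹ : ℂ) * hsymm - I / 2 * hlap +
    fderiv ℝ (fderiv ℝ u) z 1 I / 2 * I_sq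

theorem fderiv_fderiv_mul_apply (hu : ContDiffAt ℝ 2 u z) (hv : ContDiffAt ℝ 2 v z) (c : ℂ) :
    fderiv ℝ (fun w => fderiv ℝ (fun y => u y * v y) w c) z c =
      u z * fderiv ℝ (fun w => fderiv ℝ v w c) z c + v z * fderiv ℝ (fun w => fderiv ℝ u w c) z c +
        2 * (fderiv ℝ u z c * fderiv ℝ v z c) := by
  have hu' := (hu.eventually (by simp)).mono fun w hw => hw.differentiableAt two_ne_zero
  have hv' := (hv.eventually (by simp)).mono fun w hw => hw.differentiableAt two_ne_zero
  have hDu := (hasFDerivAt_fderiv_apply hu.differentiableAt_fderiv c).differentiableAt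
  have hDv := (hasFDerivAt_fderiv_apply hv.differentiableAt_fderiv c).differentiableAt
  have e : (fun w => fderiv ℝ (fun y => u y * v y) w c) =ᶠ[𝓝 z]
      fun w => u w * fderiv ℝ v w c + v w * fderiv ℝ u w c := by
    filter_upwards [hu', hv'] with w hu hv
    simp [fderiv_fun_mul hu hv]
  have hu1 := hu.differentiableAt two_ne_zero
  have hv1 := hv.differentiableAt two_ne_zero
  rw [e.fderiv_eq, fderiv_fun_add (hu1.fun_mul hDv) (hv1.fun_mul hDu), fderiv_fun_mul hu1 hDv,
    fderiv_fun_mul hv1 hDu]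
  simp only [add_apply, smul_apply, smul_eq_mul]
  ring

theorem lap_mul (hu : ContDiffAt ℝ 2 u z) (hv : ContDiffAt ℝ 2 v z) :
    lap (fun w => u w * v w) z =
      u z * lap v z + v z * lap u z + 4 * (dz u z * dzbar v z + dzbar u z * dz v z) := by
  rw [lap, fderiv_fderiv_mul_apply hu hv, fderiv_fderiv_mul_apply hu hv, lap, lap,
    fderiv_apply_eq_dz_add_dzbar u z 1, fderiv_apply_eq_dz_add_dzbar u z I,
    fderiv_apply_eq_dz_add_dzbar v z 1, fderiv_apply_eq_dz_add_dzbar v z I,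
    (starRingEnd ℂ).map_one, conj_I]
  linear_combination 2 * (dz u z - dzbar u z) * (dz v z - dzbar v z) * I_sq

end Laplacian

theorem isOpen_unitDisk : IsOpen unitDisk := Metric.isOpen_ball

theorem isPreconnected_unitDisk : IsPreconnected unitDisk := (convex_ball 0 1).isPreconnected

namespace HarmonicOnD

variable {u v : ℂ → ℂ}

theorem contDiffAt (hu : HarmonicOnD u) {z : ℂ} (hz : z ∈ unitDisk) : ContDiffAt ℝ 2 u z :=
  hu.1.contDiffAt (isOpen_unitDisk.mem_nhds hz)

theorem conj_comp (hu : HarmonicOnD u) : HarmonicOnD (fun w => conj (u w)) :=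
  ⟨conjCLE.contDiff.comp_contDiffOn hu.1, fun z hz => by rw [lap_conj, hu.2 z hz, map_zero]⟩

theorem differentiableOn_dz (hu : HarmonicOnD u) : DifferentiableOn ℂ (dz u) unitDisk :=
  fun z hz =>
    (differentiableAt_dz_of_lap_eq_zero (hu.contDiffAt hz) (hu.2 z hz)).differentiableWithinAt

theorem differentiableOn_conj_dzbar (hu : HarmonicOnD u) :
    DifferentiableOn ℂ (fun z => conj (dzbar u z)) unitDisk := by
  simpa only [funext (dz_conj u)] using hu.conj_comp.differentiableOn_dz

theorem mul_iff (hu : HarmonicOnD u) (hv : HarmonicOnD v) :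
    HarmonicOnD (fun w => u w * v w) ↔
      ∀ z ∈ unitDisk, dz u z * dzbar v z + dzbar u z * dz v z = 0 := by
  have hlap : ∀ z ∈ unitDisk, lap (fun w => u w * v w) z =
      4 * (dz u z * dzbar v z + dzbar u z * dz v z) := fun z hz => by
    rw [lap_mul (hu.contDiffAt hz) (hv.contDiffAt hz), hu.2 z hz, hv.2 z hz]
    ring
  refine ⟨fun h z hz => ?_,
    fun h => ⟨hu.1.mul hv.1, fun z hz => by rw [hlap z hz, h z hz, mul_zero]⟩⟩
  simpa [hlap z hz] using h.2 z hz

end HarmonicOnD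

section IdentityTheorem

variable {U : Set ℂ} {f g F G P Q : ℂ → ℂ}

theorem eq_zero_or_eq_zero_of_mul_eq_zero_of_conj (hU : IsOpen U) (hU' : IsPreconnected U)
    (hf : DifferentiableOn ℂ f U) (hg : DifferentiableOn ℂ (fun z => conj (g z)) U)
    (hfg : ∀ z ∈ U, f z * g z = 0) : (∀ z ∈ U, f z = 0) ∨ (∀ z ∈ U, g z = 0) := by
  simpa using (hf.analyticOnNhd hU).eq_zero_or_eq_zero_of_mul_eq_zero (hg.analyticOnNhd hU)
    (fun z hz => by simpa using hfg z hz) hU'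

theorem exists_eq_const_of_differentiableOn_conj (hU : IsOpen U) (hU' : IsPreconnected U)
    (hf : DifferentiableOn ℂ f U) (hf' : DifferentiableOn ℂ (fun z => conj (f z)) U) :
    ∃ c, ∀ z ∈ U, f z = c :=
  hU.exists_is_const_of_fderiv_eq_zero hU' (hf.restrictScalars ℝ) fun _ hz =>
    fderiv_eq_zero_of_differentiableAt_conj (hf.differentiableAt (hU.mem_nhds hz))
      (hf'.differentiableAt (hU.mem_nhds hz))

theorem exists_eq_mul_of_mul_add_mul_eq_zero (hU : IsOpen U) (hU' : IsPreconnected U)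
    (hF : DifferentiableOn ℂ F U) (hP : DifferentiableOn ℂ P U)
    (hG : DifferentiableOn ℂ (fun z => conj (G z)) U)
    (hQ : DifferentiableOn ℂ (fun z => conj (Q z)) U)
    (h : ∀ z ∈ U, F z * Q z + G z * P z = 0) {z₀ : ℂ} (hz₀ : z₀ ∈ U) (hP₀ : P z₀ ≠ 0)
    (hQ₀ : Q z₀ ≠ 0) : ∃ c, ∀ z ∈ U, F z = c * P z ∧ G z = -c * Q z := by
  have hnhds : ∀ᶠ z in 𝓝 z₀, z ∈ U ∧ P z ≠ 0 ∧ Q z ≠ 0 := by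
    filter_upwards [hU.mem_nhds hz₀,
      (hP.differentiableAt (hU.mem_nhds hz₀)).continuousAt.eventually_ne hP₀,
      (hQ.differentiableAt (hU.mem_nhds hz₀)).continuousAt.eventually_ne
        ((map_ne_zero _).2 hQ₀)]
      with z h1 h2 h3 using ⟨h1, h2, (map_ne_zero _).1 h3⟩
  obtain ⟨r, hr, hball⟩ := Metric.eventually_nhds_iff_ball.1 hnhds
  have hratio : DifferentiableOn ℂ (fun z => F z / P z) (Metric.ball z₀ r) := fun z hz =>
    (hF.mono fun w hw => (hball w hw).1) |>.div (hP.mono fun w hw => (hball w hw).1)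
      (fun w hw => (hball w hw).2.1) z hz
  have hratio' : DifferentiableOn ℂ (fun z => conj (F z / P z)) (Metric.ball z₀ r) := by
    refine ((hG.fun_neg.mono fun w hw => (hball w hw).1).fun_div
      (hQ.mono fun w hw => (hball w hw).1) fun w hw => (map_ne_zero _).2 (hball w hw).2.2).congr
      fun z hz => ?_
    obtain ⟨hzU, hPz, hQz⟩ := hball z hz
    rw [← map_neg, ← map_div₀]
    congr 1
    rw [div_eq_div_iff hPz hQz]
    linear_combination h z hzU
  obtain ⟨c, hc⟩ := exists_eq_const_of_differentiableOn_conj Metric.isOpen_ball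
    (convex_ball z₀ r).isPreconnected hratio hratio'
  have hFP : ∀ z ∈ U, F z = c * P z := fun z hz =>
    (hF.analyticOnNhd hU).eqOn_of_preconnected_of_eventuallyEq ((hP.const_mul c).analyticOnNhd hU)
      hU' hz₀ (by
        filter_upwards [Metric.ball_mem_nhds z₀ hr] with w hw
        rw [← hc w hw, div_mul_cancel₀ _ (hball w hw).2.1]) hz
  have hGQ : DifferentiableOn ℂ (fun z => conj (G z + c * Q z)) U := by
    simpa only [map_add, map_mul] using hG.fun_add (hQ.const_mul (conj c))
  refine ⟨c, fun z hz => ⟨hFP z hz, ?_⟩⟩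
  have := (eq_zero_or_eq_zero_of_mul_eq_zero_of_conj hU hU' hP hGQ fun w hw => by
    linear_combination h w hw - Q w * hFP w hw).resolve_left fun h => hP₀ (h z₀ hz₀)
  linear_combination this z hz

theorem forall_mul_add_mul_eq_zero_iff (hU : IsOpen U) (hU' : IsPreconnected U)
    (hF : DifferentiableOn ℂ F U) (hP : DifferentiableOn ℂ P U)
    (hG : DifferentiableOn ℂ (fun z => conj (G z)) U)
    (hQ : DifferentiableOn ℂ (fun z => conj (Q z)) U) :
    (∀ z ∈ U, F z * Q z + G z * P z = 0) ↔
      ((∀ z ∈ U, G z = 0) ∧ (∀ z ∈ U, Q z = 0)) ∨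
      ((∀ z ∈ U, F z = 0) ∧ (∀ z ∈ U, P z = 0)) ∨
      ∃ α β : ℂ, ¬(α = 0 ∧ β = 0) ∧
        (∀ z ∈ U, α * G z + β * Q z = 0) ∧ (∀ z ∈ U, α * F z - β * P z = 0) := by
  constructor
  · intro h
    have of_PQ (hP0 : ∀ z ∈ U, P z = 0) (hQ0 : ∀ z ∈ U, Q z = 0) : ∃ α β : ℂ,
        ¬(α = 0 ∧ β = 0) ∧ (∀ z ∈ U, α * G z + β * Q z = 0) ∧ (∀ z ∈ U, α * F z - β * P z = 0) :=
      ⟨0, 1, by simp, fun z hz => by simp [hQ0 z hz], fun z hz => by simp [hP0 z hz]⟩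
    by_cases h₀ : ∃ z₀ ∈ U, P z₀ ≠ 0 ∧ Q z₀ ≠ 0
    · obtain ⟨z₀, hz₀, hP₀, hQ₀⟩ := h₀
      obtain ⟨c, hc⟩ := exists_eq_mul_of_mul_add_mul_eq_zero hU hU' hF hP hG hQ h hz₀ hP₀ hQ₀
      refine Or.inr (Or.inr ⟨1, c, by simp, fun z hz => ?_, fun z hz => ?_⟩)
      · rw [(hc z hz).2]; ring
      · rw [(hc z hz).1]; ring
    push Not at h₀
    have hPQ : ∀ z ∈ U, P z * Q z = 0 := fun z hz => by
      by_cases hPz : P z = 0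
      · rw [hPz, zero_mul]
      · rw [h₀ z hz hPz, mul_zero]
    rcases eq_zero_or_eq_zero_of_mul_eq_zero_of_conj hU hU' hP hQ hPQ with hP0 | hQ0
    · rcases eq_zero_or_eq_zero_of_mul_eq_zero_of_conj hU hU' hF hQ
        (fun z hz => by simpa [hP0 z hz] using h z hz) with hF0 | hQ0
      · exact Or.inr (Or.inl ⟨hF0, hP0⟩)
      · exact Or.inr (Or.inr (of_PQ hP0 hQ0))
    · rcases eq_zero_or_eq_zero_of_mul_eq_zero_of_conj hU hU' hP hG
        (fun z hz => by simpa [hQ0 z hz, mul_comm] using h z hz) with hP0 | hG0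
      · exact Or.inr (Or.inr (of_PQ hP0 hQ0))
      · exact Or.inl ⟨hG0, hQ0⟩
  · rintro (⟨hG0, hQ0⟩ | ⟨hF0, hP0⟩ | ⟨α, β, hαβ, h1, h2⟩) z hz
    · simp [hG0 z hz, hQ0 z hz]
    · simp [hF0 z hz, hP0 z hz]
    · have hα : α * (F z * Q z + G z * P z) = 0 := by
        linear_combination Q z * h2 z hz + P z * h1 z hz
      have hβ : β * (F z * Q z + G z * P z) = 0 := by
        linear_combination F z * h1 z hz - G z * h2 z hz
      by_contra hX
      exact hαβ ⟨(mul_eq_zero.1 hα).resolve_right hX, (mul_eq_zero.1 hβ).resolve_right hX⟩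

end IdentityTheorem

/-- Lemma 41. If `u, v` are harmonic on `D`, then `uv` is harmonic on `D`
if and only if (a) `u` and `v` are both holomorphic, or (b) `ū` and `v̄` are both
holomorphic, or (c) there are `α, β ∈ ℂ`, not both `0`, with `αu + βv` and `ᾱū − β̄v̄`
both holomorphic. -/
theorem harmonic_mul_iff
    (u v : ℂ → ℂ) (hu : HarmonicOnD u) (hv : HarmonicOnD v) :
    HarmonicOnD (fun w => u w * v w) ↔
      (DifferentiableOn ℂ u unitDisk ∧ DifferentiableOn ℂ v unitDisk) ∨
        (DifferentiableOn ℂ (fun w => (starRingEnd ℂ) (u w)) unitDisk ∧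
          DifferentiableOn ℂ (fun w => (starRingEnd ℂ) (v w)) unitDisk) ∨
        (∃ α β : ℂ, ¬(α = 0 ∧ β = 0) ∧
          DifferentiableOn ℂ (fun w => α * u w + β * v w) unitDisk ∧
          DifferentiableOn ℂ
            (fun w => (starRingEnd ℂ) α * (starRingEnd ℂ) (u w) -
              (starRingEnd ℂ) β * (starRingEnd ℂ) (v w)) unitDisk) := by
  have hcomb := differentiableOn_const_mul_add_const_mul_iff isOpen_unitDisk
    (hu.1.differentiableOn two_ne_zero) (hv.1.differentiableOn two_ne_zero)
  have hcomb_bar := differentiableOn_const_mul_add_const_mul_iff isOpen_unitDisk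
    (hu.conj_comp.1.differentiableOn two_ne_zero) (hv.conj_comp.1.differentiableOn two_ne_zero)
  simp only [dzbar_conj] at hcomb_bar
  have hu_hol : DifferentiableOn ℂ u unitDisk ↔ ∀ z ∈ unitDisk, dzbar u z = 0 := by
    simpa using hcomb 1 0
  have hv_hol : DifferentiableOn ℂ v unitDisk ↔ ∀ z ∈ unitDisk, dzbar v z = 0 := by
    simpa using hcomb 0 1
  have hubar_hol : DifferentiableOn ℂ (fun w => conj (u w)) unitDisk ↔
      ∀ z ∈ unitDisk, dz u z = 0 := by
    simpa using hcomb_bar 1 0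
  have hvbar_hol : DifferentiableOn ℂ (fun w => conj (v w)) unitDisk ↔
      ∀ z ∈ unitDisk, dz v z = 0 := by
    simpa using hcomb_bar 0 1
  have hcomb_conj : ∀ α β : ℂ, DifferentiableOn ℂ (fun w => conj α * conj (u w) -
      conj β * conj (v w)) unitDisk ↔ ∀ z ∈ unitDisk, α * dz u z - β * dz v z = 0 := fun α β => by
    simp_rw [sub_eq_add_neg, ← neg_mul, ← map_neg, hcomb_bar]
    simp only [← map_mul, ← map_add, map_eq_zero, neg_mul, ← sub_eq_add_neg]
  rw [hu.mul_iff hv, forall_mul_add_mul_eq_zero_iff isOpen_unitDisk isPreconnected_unitDisk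
    hu.differentiableOn_dz hv.differentiableOn_dz hu.differentiableOn_conj_dzbar
    hv.differentiableOn_conj_dzbar]
  simp only [hu_hol, hv_hol, hubar_hol, hvbar_hol, hcomb, hcomb_conj]
end
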